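/- arXiv:1608.03554 — 2 statements merged into one kernel-verified Lean document; each statement's English description precedes it below -/
import Mathlib

section
/- Let G act transitively on a countable set X with Schreier graph structure given by a generating set S (edges x ~ s·x for s ∈ S), and let μ be a probability measure on G with induced kernel P_μ on X. If for every pair of neighboring points x, y = s·x (s ∈ S) we have liminf_{m→∞} ‖μ^{(m)}·x − μ^{(m)}·y‖₁ = 0, then every bounded P_μ-harmonic function h : X → ℝ is constant. -/
open scoped Classical
open Filter

noncomputable section

variable {G : Type*} [Group G] {X : Type*} [MulAction G X]

/-- Pushforward of a discrete measure `μ` on `G` under the action at `x`. -/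
def pushMeas (μ : G → ℝ) (x : X) : X → ℝ :=
  fun y => ∑' g : G, if g • x = y then μ g else 0

/-- ℓ¹ distance between two functions. -/
def dist1 {Y : Type*} (f g : Y → ℝ) : ℝ := ∑' y, |f y - g y|

/-- Convolution of discrete measures: `(μ ∗ ν)(g) = ∑_h μ(g h⁻¹) ν(h)`. -/
def conv (μ ν : G → ℝ) : G → ℝ := fun g => ∑' h : G, μ (g * h⁻¹) * ν h

/-- Point mass at the identity. -/
def deltaOne : G → ℝ := fun g => if g = 1 then 1 else 0

/-- `n`-fold convolution power `μ^{(n)}` (innermost factor applied first). -/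
def convPow (μ : G → ℝ) : ℕ → (G → ℝ)
  | 0 => deltaOne
  | n + 1 => conv (convPow μ n) μ

/-- `n`-step kernel (matrix power). -/
def kpow {Y : Type*} (P : Y → Y → ℝ) : ℕ → (Y → Y → ℝ)
  | 0 => fun x y => if x = y then 1 else 0
  | n + 1 => fun x y => ∑' z, P x z * kpow P n z y

/-- Transition kernel on `X` induced by `μ`. -/
def transK (μ : G → ℝ) (x y : X) : ℝ := pushMeas μ x y

/-- A function is `P`-harmonic. -/
def IsHarmonic {Y : Type*} (P : Y → Y → ℝ) (h : Y → ℝ) : Prop :=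
  ∀ x, h x = ∑' y, P x y * h y

/-- Boundedness of a real function. -/
def BoundedFn {Y : Type*} (h : Y → ℝ) : Prop := ∃ C, ∀ x, |h x| ≤ C

/-- `μ` is a (discrete) probability measure. -/
def IsProb {G : Type*} (μ : G → ℝ) : Prop := (∀ g, 0 ≤ μ g) ∧ HasSum μ 1

namespace Stmt4Aux

variable {G : Type*} [Group G] {X : Type*} [MulAction G X]

lemma pm_nonneg {ν : G → ℝ} (hn : ∀ g, 0 ≤ ν g) (x : X) (y : X) :
    0 ≤ pushMeas ν x y := by
  rw [show pushMeas ν x y = ∑' g : G, if g • x = y then ν g else 0 from rfl]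
  refine tsum_nonneg fun g => ?_
  split
  · exact hn g
  · exact le_rfl

lemma sum_uncurry {ν : G → ℝ} (hs : Summable ν) (hn : ∀ g, 0 ≤ ν g) (x : X)
    {f : X → ℝ} {C : ℝ} (hC : ∀ y, |f y| ≤ C) :
    Summable (fun p : G × X => if p.1 • x = p.2 then ν p.1 * f p.2 else 0) := by
  have hC0 : 0 ≤ C := (abs_nonneg _).trans (hC x)
  have hmajn : 0 ≤ (fun p : G × X => if p.1 • x = p.2 then ν p.1 * C else 0) := by
    intro p; dsimp only; split
    · exact mul_nonneg (hn _) hC0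
    · exact le_rfl
  have hmaj : Summable (fun p : G × X => if p.1 • x = p.2 then ν p.1 * C else 0) := by
    rw [summable_prod_of_nonneg hmajn]
    refine ⟨fun g => ?_, ?_⟩
    · exact summable_of_ne_finset_zero (s := {g • x}) fun y hy => by
        simp only [Finset.mem_singleton] at hy
        exact if_neg fun h => hy h.symm
    · have he : (fun g : G => ∑' y : X, if g • x = y then ν g * C else 0)
          = fun g => ν g * C := by
        funext g
        exact (tsum_eq_single (g • x) fun y hy => if_neg fun h => hy h.symm).trans (if_pos rfl)
      rw [he]
      exact hs.mul_right C
  refine Summable.of_norm_bounded hmaj fun p => ?_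
  by_cases hp : p.1 • x = p.2
  · rw [if_pos hp, if_pos hp, Real.norm_eq_abs, abs_mul, abs_of_nonneg (hn _)]
    exact mul_le_mul_of_nonneg_left (hC _) (hn _)
  · rw [if_neg hp, if_neg hp]
    simp

lemma tsum_push {ν : G → ℝ} (hs : Summable ν) (hn : ∀ g, 0 ≤ ν g) (x : X)
    {f : X → ℝ} {C : ℝ} (hC : ∀ y, |f y| ≤ C) :
    ∑' y, pushMeas ν x y * f y = ∑' g, ν g * f (g • x) := by
  have hF := sum_uncurry hs hn x hC
  have h1 : ∀ y : X, pushMeas ν x y * f y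
      = ∑' g : G, if g • x = y then ν g * f y else 0 := by
    intro y
    rw [pushMeas, ← tsum_mul_right]
    exact tsum_congr fun g => by split <;> simp
  calc ∑' y, pushMeas ν x y * f y
      = ∑' y, ∑' g : G, (if g • x = y then ν g * f y else 0) := tsum_congr h1
    _ = ∑' g : G, ∑' y, (if g • x = y then ν g * f y else 0) :=
        Summable.tsum_comm (f := fun g y => if g • x = y then ν g * f y else 0) hF
    _ = ∑' g, ν g * f (g • x) := tsum_congr fun g =>
        (tsum_eq_single (g • x) fun y hy => if_neg fun h => hy h.symm).trans (if_pos rfl)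

lemma summable_pushMeas {ν : G → ℝ} (hs : Summable ν) (hn : ∀ g, 0 ≤ ν g) (x : X) :
    Summable (pushMeas ν x) := by
  have hF := sum_uncurry (f := fun _ : X => (1:ℝ)) (C := 1) hs hn x (fun y => by norm_num)
  have hswap : Summable (fun p : X × G => if p.2 • x = p.1 then ν p.2 else 0) := by
    have h2 := ((Equiv.prodComm X G).summable_iff
      (f := fun p : G × X => if p.1 • x = p.2 then ν p.1 * 1 else 0)).mpr hF
    simpa [Function.comp_def, mul_one] using h2
  have hnn : 0 ≤ (fun p : X × G => if p.2 • x = p.1 then ν p.2 else 0) := by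
    intro p; dsimp only; split
    · exact hn _
    · exact le_rfl
  have := ((summable_prod_of_nonneg hnn).mp hswap).2
  exact this

lemma summable_push_mul {ν : G → ℝ} (hs : Summable ν) (hn : ∀ g, 0 ≤ ν g) (x : X)
    {f : X → ℝ} {C : ℝ} (hC : ∀ y, |f y| ≤ C) :
    Summable (fun y => pushMeas ν x y * f y) := by
  refine Summable.of_norm_bounded
    ((summable_pushMeas hs hn x).mul_right C) fun y => ?_
  rw [Real.norm_eq_abs, abs_mul, abs_of_nonneg (pm_nonneg hn x y)]
  exact mul_le_mul_of_nonneg_left (hC _) (pm_nonneg hn x y)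

lemma conv_uncurry_summable {ν μ : G → ℝ} (hsν : Summable ν) (hsμ : Summable μ)
    (hnν : ∀ g, 0 ≤ ν g) (hnμ : ∀ g, 0 ≤ μ g) :
    Summable (fun p : G × G => ν (p.1 * p.2⁻¹) * μ p.2) := by
  have base : Summable (fun p : G × G => ν p.1 * μ p.2) :=
    hsν.mul_of_nonneg hsμ hnν hnμ
  let e : G × G ≃ G × G :=
    ⟨fun p => (p.1 * p.2⁻¹, p.2), fun p => (p.1 * p.2, p.2),
      fun p => by simp, fun p => by simp⟩
  have := (e.summable_iff (f := fun p : G × G => ν p.1 * μ p.2)).mpr base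
  simpa [e, Function.comp_def] using this

lemma conv_nonneg' {ν μ : G → ℝ} (hnν : ∀ g, 0 ≤ ν g) (hnμ : ∀ g, 0 ≤ μ g) (g : G) :
    0 ≤ conv ν μ g :=
  tsum_nonneg fun h => mul_nonneg (hnν _) (hnμ _)

lemma summable_conv {ν μ : G → ℝ} (hsν : Summable ν) (hsμ : Summable μ)
    (hnν : ∀ g, 0 ≤ ν g) (hnμ : ∀ g, 0 ≤ μ g) :
    Summable (conv ν μ) := by
  have hu := conv_uncurry_summable hsν hsμ hnν hnμ
  have hnn : 0 ≤ (fun p : G × G => ν (p.1 * p.2⁻¹) * μ p.2) :=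
    fun p => mul_nonneg (hnν _) (hnμ _)
  have := ((summable_prod_of_nonneg hnn).mp hu).2
  exact this

lemma conv_tsum_act {ν μ : G → ℝ} (hsν : Summable ν) (hsμ : Summable μ)
    (hnν : ∀ g, 0 ≤ ν g) (hnμ : ∀ g, 0 ≤ μ g) (x : X)
    {f : X → ℝ} {C : ℝ} (hC : ∀ y, |f y| ≤ C) :
    ∑' g, conv ν μ g * f (g • x) = ∑' t, μ t * ∑' k, ν k * f (k • (t • x)) := by
  have hu := conv_uncurry_summable hsν hsμ hnν hnμ
  have hFu : Summable (fun p : G × G => ν (p.1 * p.2⁻¹) * μ p.2 * f (p.1 • x)) := by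
    refine Summable.of_norm_bounded
      (hu.mul_right C) fun p => ?_
    rw [Real.norm_eq_abs, abs_mul, abs_of_nonneg (mul_nonneg (hnν _) (hnμ _))]
    exact mul_le_mul_of_nonneg_left (hC _) (mul_nonneg (hnν _) (hnμ _))
  calc ∑' g, conv ν μ g * f (g • x)
      = ∑' g, ∑' t, ν (g * t⁻¹) * μ t * f (g • x) := by
        refine tsum_congr fun g => ?_
        rw [conv, ← tsum_mul_right]
    _ = ∑' t, ∑' g, ν (g * t⁻¹) * μ t * f (g • x) :=
        (Summable.tsum_comm (f := fun g t => ν (g * t⁻¹) * μ t * f (g • x)) hFu).symm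
    _ = ∑' t, μ t * ∑' k, ν k * f (k • (t • x)) := by
        refine tsum_congr fun t => ?_
        rw [← Equiv.tsum_eq (Equiv.mulRight t)
          (fun g => ν (g * t⁻¹) * μ t * f (g • x)), ← tsum_mul_left]
        refine tsum_congr fun k => ?_
        simp only [Equiv.coe_mulRight, mul_inv_cancel_right, mul_smul]
        ring

lemma convPow_nonneg {μ : G → ℝ} (hn : ∀ g, 0 ≤ μ g) : ∀ m g, 0 ≤ convPow μ m g
  | 0, g => by unfold convPow deltaOne; split <;> norm_num
  | m + 1, g => tsum_nonneg fun h => mul_nonneg (convPow_nonneg hn m _) (hn _)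

lemma convPow_summable {μ : G → ℝ} (hs : Summable μ) (hn : ∀ g, 0 ≤ μ g) :
    ∀ m, Summable (convPow μ m)
  | 0 => summable_of_ne_finset_zero (s := {1}) fun g hg => by
      simp only [Finset.mem_singleton] at hg
      simp [convPow, deltaOne, hg]
  | m + 1 => summable_conv (convPow_summable hs hn m) hs (convPow_nonneg hn m) hn

lemma harm_iter {μ : G → ℝ} (hs : Summable μ) (hn : ∀ g, 0 ≤ μ g)
    {h : X → ℝ} {C : ℝ} (hC : ∀ y, |h y| ≤ C) (hh : IsHarmonic (transK μ) h) :
    ∀ m (x : X), h x = ∑' g, convPow μ m g * h (g • x) := by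
  intro m
  induction m with
  | zero =>
    intro x
    symm
    calc ∑' g : G, convPow μ 0 g * h (g • x)
        = deltaOne (1:G) * h ((1:G) • x) :=
          tsum_eq_single 1 fun g hg => by simp [convPow, deltaOne, hg]
      _ = h x := by simp [deltaOne]
  | succ m ih =>
    intro x
    have hharm : ∀ z : X, h z = ∑' g, μ g * h (g • z) := by
      intro z
      rw [hh z]
      exact tsum_push hs hn z hC
    calc h x = ∑' t, μ t * h (t • x) := hharm x
      _ = ∑' t, μ t * ∑' k, convPow μ m k * h (k • (t • x)) :=
          tsum_congr fun t => by rw [← ih (t • x)]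
      _ = ∑' g, conv (convPow μ m) μ g * h (g • x) :=
          (conv_tsum_act (convPow_summable hs hn m) hs (convPow_nonneg hn m) hn x hC).symm
      _ = ∑' g, convPow μ (m + 1) g * h (g • x) := rfl

lemma tsum_pushMeas {ν : G → ℝ} (hs : Summable ν) (hn : ∀ g, 0 ≤ ν g) (x : X) :
    ∑' y, pushMeas ν x y = ∑' g, ν g := by
  have := tsum_push (f := fun _ : X => (1:ℝ)) (C := 1) hs hn x (fun y => by norm_num)
  simpa using this

lemma tsum_convPow {μ : G → ℝ} (hs : Summable μ) (hn : ∀ g, 0 ≤ μ g)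
    (h1 : ∑' g, μ g = 1) : ∀ m, ∑' g, convPow μ m g = 1
  | 0 => by
      have : (∑' g : G, convPow μ 0 g) = convPow μ 0 (1:G) :=
        tsum_eq_single 1 fun g hg => by simp [convPow, deltaOne, hg]
      rw [this]; simp [convPow, deltaOne]
  | m + 1 => by
      have key := conv_tsum_act (X := G) (convPow_summable hs hn m) hs
        (convPow_nonneg hn m) hn (1 : G) (f := fun _ : G => (1:ℝ)) (C := 1)
        (fun _ => by norm_num)
      simp only [mul_one] at key
      have : (∑' g, convPow μ (m + 1) g) = ∑' t, μ t * ∑' k, convPow μ m k := by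
        simpa [convPow] using key
      rw [this, tsum_convPow hs hn h1 m]
      simpa using h1

end Stmt4Aux

open Stmt4Aux

set_option maxHeartbeats 1000000 in
/-- liminf merging along edges of a connected Schreier graph implies the
Liouville property. -/
theorem stmt4 {G : Type*} [Group G] [Countable G] {X : Type*} [MulAction G X] [Countable X]
    (S : Set G) (μ : G → ℝ) (hμ : IsProb μ)
    (hconn : ∀ x y : X, Relation.ReflTransGen
      (fun a b => ∃ s ∈ S, s • a = b ∨ s • b = a) x y)
    (hlim : ∀ x : X, ∀ s ∈ S,
      Filter.liminf
        (fun m => dist1 (pushMeas (convPow μ m) x) (pushMeas (convPow μ m) (s • x)))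
        Filter.atTop = 0) :
    ∀ h : X → ℝ, BoundedFn h → IsHarmonic (transK μ) h → ∀ x y : X, h x = h y := by
  obtain ⟨hnμ, hsum1⟩ := hμ
  have hsμ : Summable μ := hsum1.summable
  have hμ1 : ∑' g, μ g = 1 := hsum1.tsum_eq
  intro h hb hh x y
  obtain ⟨C, hC⟩ := hb
  have hC0 : 0 ≤ C := (abs_nonneg _).trans (hC x)
  have key : ∀ z : X, ∀ s ∈ S, h z = h (s • z) := by
    intro z s hsS
    set d : ℕ → ℝ := fun m =>
      dist1 (pushMeas (convPow μ m) z) (pushMeas (convPow μ m) (s • z)) with hd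
    have hbound : ∀ m, |h z - h (s • z)| ≤ C * d m := by
      intro m
      have hsm := convPow_summable hsμ hnμ m
      have hnm := convPow_nonneg (μ := μ) hnμ m
      have hz : h z = ∑' w, pushMeas (convPow μ m) z w * h w :=
        (harm_iter hsμ hnμ hC hh m z).trans (tsum_push hsm hnm z hC).symm
      have hy : h (s • z) = ∑' w, pushMeas (convPow μ m) (s • z) w * h w :=
        (harm_iter hsμ hnμ hC hh m (s • z)).trans (tsum_push hsm hnm (s • z) hC).symm
      have hsum_z : Summable (fun w => pushMeas (convPow μ m) z w * h w) :=
        summable_push_mul hsm hnm z hC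
      have hsum_y : Summable (fun w => pushMeas (convPow μ m) (s • z) w * h w) :=
        summable_push_mul hsm hnm (s • z) hC
      have habs : Summable (fun w =>
          |pushMeas (convPow μ m) z w * h w - pushMeas (convPow μ m) (s • z) w * h w|) :=
        (hsum_z.sub hsum_y).abs
      have hdiff : h z - h (s • z) = ∑' w,
          (pushMeas (convPow μ m) z w * h w - pushMeas (convPow μ m) (s • z) w * h w) := by
        rw [hz, hy, Summable.tsum_sub hsum_z hsum_y]
      rw [hdiff]
      have hpq : Summable (fun w =>
          |pushMeas (convPow μ m) z w - pushMeas (convPow μ m) (s • z) w|) :=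
        ((summable_pushMeas hsm hnm z).sub (summable_pushMeas hsm hnm (s • z))).abs
      calc |∑' w, (pushMeas (convPow μ m) z w * h w
              - pushMeas (convPow μ m) (s • z) w * h w)|
          ≤ ∑' w, |pushMeas (convPow μ m) z w * h w
              - pushMeas (convPow μ m) (s • z) w * h w| := by
            have hnorm := norm_tsum_le_tsum_norm
              (f := fun w => pushMeas (convPow μ m) z w * h w
                - pushMeas (convPow μ m) (s • z) w * h w)
              (by simpa [Real.norm_eq_abs] using habs)
            simpa [Real.norm_eq_abs] using hnorm
        _ ≤ ∑' w, |pushMeas (convPow μ m) z w - pushMeas (convPow μ m) (s • z) w| * C := by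
            refine Summable.tsum_le_tsum (fun w => ?_) habs (hpq.mul_right C)
            rw [← sub_mul, abs_mul]
            exact mul_le_mul_of_nonneg_left (hC w) (abs_nonneg _)
        _ = C * d m := by rw [tsum_mul_right, mul_comm]; rfl
    have hd0 : ∀ m, 0 ≤ d m := fun m => tsum_nonneg fun _ => abs_nonneg _
    have hd2 : ∀ m, d m ≤ 2 := by
      intro m
      have hsm := convPow_summable hsμ hnμ m
      have hnm := convPow_nonneg (μ := μ) hnμ m
      have hmass : ∀ w : X, ∑' u, pushMeas (convPow μ m) w u = 1 := fun w => by
        rw [tsum_pushMeas hsm hnm w, tsum_convPow hsμ hnμ hμ1 m]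
      have hp := summable_pushMeas hsm hnm z
      have hq := summable_pushMeas hsm hnm (s • z)
      have h1 : d m ≤ ∑' u, (pushMeas (convPow μ m) z u + pushMeas (convPow μ m) (s • z) u) := by
        refine Summable.tsum_le_tsum (fun u => ?_) ((hp.sub hq).abs) (hp.add hq)
        have htri : |pushMeas (convPow μ m) z u - pushMeas (convPow μ m) (s • z) u|
            ≤ |pushMeas (convPow μ m) z u| + |pushMeas (convPow μ m) (s • z) u| := by
          simpa [sub_eq_add_neg, abs_neg] using
            abs_add_le (pushMeas (convPow μ m) z u) (-(pushMeas (convPow μ m) (s • z) u))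
        rwa [abs_of_nonneg (pm_nonneg hnm z u), abs_of_nonneg (pm_nonneg hnm (s • z) u)] at htri
      calc d m ≤ _ := h1
        _ = 1 + 1 := by rw [Summable.tsum_add hp hq, hmass z, hmass (s • z)]
        _ ≤ 2 := by norm_num
    have heps : ∀ ε > (0:ℝ), |h z - h (s • z)| ≤ C * ε := by
      intro ε hε
      have hl : Filter.liminf d Filter.atTop = 0 := hlim z s hsS
      have hcob : Filter.IsCoboundedUnder (· ≥ ·) Filter.atTop d :=
        Filter.isCoboundedUnder_ge_of_le Filter.atTop (x := 2) hd2
      have hfreq : ∃ᶠ m in Filter.atTop, d m < ε :=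
        Filter.frequently_lt_of_liminf_lt hcob (by rw [hl]; exact hε)
      obtain ⟨m, hm⟩ := hfreq.exists
      calc |h z - h (s • z)| ≤ C * d m := hbound m
        _ ≤ C * ε := mul_le_mul_of_nonneg_left hm.le hC0
    have hzero : |h z - h (s • z)| ≤ 0 := by
      by_contra hpos
      push_neg at hpos
      have h2 := heps (|h z - h (s • z)| / (C + 1)) (by positivity)
      have hcp : (0:ℝ) < C + 1 := by linarith
      have h3 := mul_le_mul_of_nonneg_right h2 hcp.le
      rw [mul_assoc, div_mul_cancel₀ _ (ne_of_gt hcp)] at h3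
      nlinarith [h3, hpos]
    have := abs_nonpos_iff.mp hzero
    linarith [sub_eq_zero.mp this]
  have hxy := hconn x y
  induction hxy with
  | refl => rfl
  | tail hab hbc ih =>
    obtain ⟨s, hsS, hcase⟩ := hbc
    rcases hcase with h1 | h2
    · rw [ih, ← h1]; exact key _ s hsS
    · rw [ih, ← h2]; exact (key _ s hsS).symm
end
end

section
/- Lemma 1 (necessity of merging for Liouville): Let G act on a countable set X, μ a probability measure on G such that the induced kernel P_μ is irreducible on X and lazy (P_μ(x,x) ≥ 1/2 for all x). If every bounded P_μ-harmonic function on X is constant, then for any two points x, y ∈ X, lim_{n→∞} ‖μ^{(n)}·x − μ^{(n)}·y‖₁ = 0. -/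
open scoped Classical
open Filter

noncomputable section

variable {G : Type*} [Group G] {X : Type*} [MulAction G X]

/-!
The ℓ¹ distance `D n` between the rows `P^n(x, ·)` and `P^n(y, ·)` is non-increasing, so it
converges to some `L ≥ 0`. Pairing the rows with `f n = sign (P^n(x, ·) - P^n(y, ·))` gives
functions `g n = P^n (f n)` bounded by `1` with `g n x - g n y = D n`. Laziness means
`P = (1 + Q) / 2` for a stochastic `Q`, so `P^n` is the binomial mixture `∑ C(n, k) Q^k / 2^n`
and `‖P^(n+1)(z, ·) - P^n(z, ·)‖₁` is at most the ℓ¹ distance between the laws `Bin(n + 1, 1/2)`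
and `Bin(n, 1/2)`, which is `C(n, n/2) / 2^n → 0`. Hence `P (g n) - g n → 0`
pointwise, and a pointwise limit of `g n` along an ultrafilter is a bounded harmonic function `h`
with `h x - h y = L`. The Liouville property forces `L = 0`.
-/

open Topology

structure IsStochastic {α β : Type*} (K : α → β → ℝ) : Prop where
  nonneg : ∀ a b, 0 ≤ K a b
  hasSum : ∀ a, HasSum (K a) 1

lemma isStochastic_ite_eq {α β : Type*} (φ : α → β) :
    IsStochastic fun a b => if φ a = b then (1 : ℝ) else 0 :=
  ⟨fun a b => by positivity, fun a => by simpa [eq_comm] using hasSum_ite_eq (φ a) (1 : ℝ)⟩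

lemma summable_mul_of_abs_le_one {α : Type*} {c f : α → ℝ} (hc : Summable c)
    (hf : ∀ a, |f a| ≤ 1) : Summable fun a => c a * f a :=
  hc.abs.of_norm_bounded fun a => by
    simpa [abs_mul] using mul_le_of_le_one_right (abs_nonneg (c a)) (hf a)

lemma abs_tsum_mul_le_tsum_abs {α : Type*} {c f : α → ℝ} (hc : Summable c)
    (hf : ∀ a, |f a| ≤ 1) : |∑' a, c a * f a| ≤ ∑' a, |c a| := by
  have hbound : ∀ a, ‖c a * f a‖ ≤ |c a| := fun a => by
    simpa [abs_mul] using mul_le_of_le_one_right (abs_nonneg (c a)) (hf a)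
  exact (norm_tsum_le_tsum_norm (summable_mul_of_abs_le_one hc hf).norm).trans
    ((summable_mul_of_abs_le_one hc hf).norm.tsum_le_tsum hbound hc.abs)

namespace IsStochastic

variable {α β : Type*} {K : α → β → ℝ}

lemma summable (hK : IsStochastic K) (a : α) : Summable (K a) := (hK.hasSum a).summable

lemma le_one (hK : IsStochastic K) (a : α) (b : β) : K a b ≤ 1 :=
  le_hasSum (hK.hasSum a) b fun b' _ => hK.nonneg a b'

lemma abs_le_one (hK : IsStochastic K) (a : α) (b : β) : |K a b| ≤ 1 :=
  abs_le.2 ⟨by linarith [hK.nonneg a b], hK.le_one a b⟩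

lemma summable_mul_prod (hK : IsStochastic K) {a : α → ℝ} (ha : Summable a) {f : β → ℝ}
    {C : ℝ} (hf : ∀ b, |f b| ≤ C) :
    Summable (Function.uncurry fun i j => a i * K i j * f j) := by
  have hdom : Summable fun p : α × β => |a p.1| * K p.1 p.2 * C := by
    refine ((summable_prod_of_nonneg fun p => ?_).2 ⟨fun i => ?_, ?_⟩).mul_right C
    · exact mul_nonneg (abs_nonneg _) (hK.nonneg _ _)
    · exact (hK.summable i).mul_left |a i|
    · simpa only [tsum_mul_left, (hK.hasSum _).tsum_eq, mul_one] using ha.abs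
  refine Summable.of_norm_bounded hdom fun p => ?_
  rw [Function.uncurry_apply_pair, Real.norm_eq_abs, abs_mul, abs_mul,
    abs_of_nonneg (hK.nonneg _ _)]
  exact mul_le_mul_of_nonneg_left (hf _) (mul_nonneg (abs_nonneg _) (hK.nonneg _ _))

lemma tsum_mul_tsum_comm (hK : IsStochastic K) {a : α → ℝ} (ha : Summable a) {f : β → ℝ}
    {C : ℝ} (hf : ∀ b, |f b| ≤ C) :
    ∑' i, a i * ∑' j, K i j * f j = ∑' j, (∑' i, a i * K i j) * f j := by
  have hs := hK.summable_mul_prod ha hf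
  calc ∑' i, a i * ∑' j, K i j * f j = ∑' i, ∑' j, a i * K i j * f j := by
        simp only [mul_assoc, tsum_mul_left]
    _ = ∑' j, ∑' i, a i * K i j * f j := hs.tsum_comm.symm
    _ = ∑' j, (∑' i, a i * K i j) * f j := by simp only [tsum_mul_right]

lemma hasSum_tsum_mul (hK : IsStochastic K) {a : α → ℝ} {c : ℝ} (ha : HasSum a c) :
    HasSum (fun j => ∑' i, a i * K i j) c := by
  have hs : Summable (Function.uncurry fun i j => a i * K i j) := by
    simpa only [mul_one] using
      hK.summable_mul_prod ha.summable (f := fun _ => 1) (C := 1) fun _ => abs_one.le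
  have hsum : Summable fun j => ∑' i, a i * K i j := hs.prod_symm.prod
  refine hsum.hasSum_iff.mpr ?_
  rw [hs.tsum_comm]
  simpa only [tsum_mul_left, (hK.hasSum _).tsum_eq, mul_one] using ha.tsum_eq

lemma summable_mul_apply (hK : IsStochastic K) {a : α → ℝ} (ha : Summable a) (j : β) :
    Summable fun i => a i * K i j :=
  summable_mul_of_abs_le_one ha fun i => hK.abs_le_one i j

lemma dist1_tsum_mul_le (hK : IsStochastic K) {a b : α → ℝ} (ha : Summable a)
    (hb : Summable b) :
    dist1 (fun j => ∑' i, a i * K i j) (fun j => ∑' i, b i * K i j) ≤ dist1 a b := by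
  have hmass := hK.hasSum_tsum_mul (ha.sub hb).abs.hasSum
  have hle : ∀ j, |∑' i, a i * K i j - ∑' i, b i * K i j| ≤ ∑' i, |a i - b i| * K i j := by
    intro j
    rw [← (hK.summable_mul_apply ha j).tsum_sub (hK.summable_mul_apply hb j)]
    simp_rw [← sub_mul]
    rw [← Real.norm_eq_abs]
    refine (norm_tsum_le_tsum_norm (hK.summable_mul_apply (ha.sub hb) j).norm).trans_eq
      (tsum_congr fun i => ?_)
    rw [Real.norm_eq_abs, abs_mul, abs_of_nonneg (hK.nonneg i j)]
  have hsum : Summable fun j => |∑' i, a i * K i j - ∑' i, b i * K i j| :=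
    hmass.summable.of_nonneg_of_le (fun _ => abs_nonneg _) hle
  exact (hsum.tsum_le_tsum hle hmass.summable).trans_eq hmass.tsum_eq

end IsStochastic

section kpow

variable {Y : Type*} {P : Y → Y → ℝ}

lemma IsStochastic.kpow (hP : IsStochastic P) (n : ℕ) : IsStochastic (kpow P n) := by
  induction n with
  | zero => exact isStochastic_ite_eq id
  | succ n ih => exact ⟨fun x y => tsum_nonneg fun z => mul_nonneg (hP.nonneg x z) (ih.nonneg z y),
      fun x => ih.hasSum_tsum_mul (hP.hasSum x)⟩

lemma kpow_succ' (hP : IsStochastic P) (n : ℕ) (x y : Y) :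
    kpow P (n + 1) x y = ∑' z, kpow P n x z * P z y := by
  induction n generalizing x with
  | zero => simp [kpow]
  | succ n ih =>
    calc kpow P (n + 2) x y = ∑' z, P x z * ∑' w, kpow P n z w * P w y := by
          simp only [kpow, ← ih]
      _ = ∑' w, kpow P (n + 1) x w * P w y :=
          (hP.kpow n).tsum_mul_tsum_comm (hP.summable x) fun w => hP.abs_le_one w y

lemma antitone_dist1_kpow (hP : IsStochastic P) (x y : Y) :
    Antitone fun n => dist1 (kpow P n x) (kpow P n y) := by
  refine antitone_nat_of_succ_le fun n => ?_
  simp only [funext (kpow_succ' hP n x), funext (kpow_succ' hP n y)]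
  exact hP.dist1_tsum_mul_le ((hP.kpow n).summable x) ((hP.kpow n).summable y)

lemma isStochastic_kpow_row (hP : IsStochastic P) (x : Y) : IsStochastic fun k => kpow P k x :=
  ⟨fun k => (hP.kpow k).nonneg x, fun k => (hP.kpow k).hasSum x⟩

end kpow

section binomial

open Finset

lemma summable_choose_div_two_pow (n : ℕ) : Summable fun k => (n.choose k : ℝ) / 2 ^ n :=
  summable_of_ne_finset_zero (s := range (n + 1)) fun k hk => by
    rw [Nat.choose_eq_zero_of_lt (by simpa using hk), Nat.cast_zero, zero_div]

lemma tsum_choose_mul_eq_sum (n : ℕ) (c : ℕ → ℝ) :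
    ∑' k, (n.choose k : ℝ) * c k = ∑ k ∈ range (n + 1), (n.choose k : ℝ) * c k :=
  tsum_eq_sum fun k hk => by
    rw [Nat.choose_eq_zero_of_lt (by simpa using hk), Nat.cast_zero, zero_mul]

lemma tsum_choose_succ_mul (n : ℕ) (c : ℕ → ℝ) :
    ∑' k, ((n + 1).choose k : ℝ) * c k = ∑' k, (n.choose k : ℝ) * (c k + c (k + 1)) := by
  have hshift : ∑ k ∈ range (n + 1), (n.choose (k + 1) : ℝ) * c (k + 1)
      = ∑ k ∈ range (n + 1), (n.choose k : ℝ) * c k - c 0 := by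
    rw [sum_range_succ, sum_range_succ' _ n, Nat.choose_succ_self]
    simp
  rw [tsum_choose_mul_eq_sum, tsum_choose_mul_eq_sum, sum_range_succ' _ (n + 1)]
  simp only [Nat.choose_succ_succ', Nat.cast_add, add_mul, mul_add, sum_add_distrib, hshift]
  simp only [Nat.choose_zero_right, Nat.cast_one, one_mul]
  ring

lemma sum_range_abs_sub_of_unimodal {f : ℕ → ℝ} {m : ℕ} (hmono : ∀ k < m, f k ≤ f (k + 1))
    (hanti : ∀ k, m ≤ k → f (k + 1) ≤ f k) (r : ℕ) :
    ∑ k ∈ range (m + r), |f (k + 1) - f k| = 2 * f m - f 0 - f (m + r) := by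
  have hup : ∑ k ∈ range m, |f (k + 1) - f k| = f m - f 0 := by
    rw [← sum_range_sub f m]
    exact sum_congr rfl fun k hk => abs_of_nonneg (sub_nonneg.2 (hmono k (mem_range.1 hk)))
  have hdown : ∑ k ∈ range r, |f (m + k + 1) - f (m + k)| = f m - f (m + r) := by
    have htel := sum_range_sub' (fun k => f (m + k)) r
    rw [add_zero] at htel
    rw [← htel]
    refine sum_congr rfl fun k _ => ?_
    rw [abs_of_nonpos (sub_nonpos.2 (hanti _ (by omega))), add_assoc]
    ring
  rw [sum_range_add, hup, hdown]
  ring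

lemma Nat.choose_succ_le_choose_of_half_le {n k : ℕ} (hk : n / 2 ≤ k) :
    n.choose (k + 1) ≤ n.choose k :=
  Nat.le_of_mul_le_mul_right (by rw [Nat.choose_succ_right_eq]; gcongr; omega) k.succ_pos

lemma tsum_abs_choose_succ_div_sub (n : ℕ) :
    ∑' k, |((n + 1).choose k : ℝ) / 2 ^ (n + 1) - (n.choose k : ℝ) / 2 ^ n|
      = (n.choose (n / 2) : ℝ) / 2 ^ n := by
  have hsum := sum_range_abs_sub_of_unimodal (f := fun k => (n.choose k : ℝ)) (m := n / 2)
    (fun k hk => by exact_mod_cast Nat.choose_le_succ_of_lt_half_left hk)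
    (fun k hk => by exact_mod_cast Nat.choose_succ_le_choose_of_half_le hk) (n + 1 - n / 2)
  rw [show n / 2 + (n + 1 - n / 2) = n + 1 by omega, Nat.choose_succ_self, Nat.choose_zero_right]
    at hsum
  have hpos : (0 : ℝ) < 2 ^ (n + 1) := by positivity
  have hsplit : ∀ a b : ℝ, (a + b) / 2 ^ (n + 1) - b / 2 ^ n = (a - b) / 2 ^ (n + 1) := by
    intro a b; rw [pow_succ]; field_simp; ring
  have hterm : ∀ k, |((n + 1).choose (k + 1) : ℝ) / 2 ^ (n + 1) - (n.choose (k + 1) : ℝ) / 2 ^ n|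
      = |(n.choose (k + 1) : ℝ) - n.choose k| / 2 ^ (n + 1) := fun k => by
    rw [Nat.choose_succ_succ', Nat.cast_add, hsplit, abs_div, abs_of_pos hpos, abs_sub_comm]
  have hzero : |((n + 1).choose 0 : ℝ) / 2 ^ (n + 1) - (n.choose 0 : ℝ) / 2 ^ n|
      = 1 / 2 ^ (n + 1) := by
    have h := hsplit 0 1
    rw [zero_add, zero_sub] at h
    rw [Nat.choose_zero_right, Nat.choose_zero_right, Nat.cast_one, h, abs_div, abs_neg, abs_one,
      abs_of_pos hpos]
  rw [tsum_eq_sum (s := range (n + 2)) fun k hk => by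
      rw [Nat.choose_eq_zero_of_lt (by simp at hk; omega),
        Nat.choose_eq_zero_of_lt (by simp at hk; omega)]
      simp]
  rw [sum_range_succ', sum_congr rfl fun k _ => hterm k, ← sum_div, hsum, hzero, pow_succ]
  field_simp
  ring

end binomial

lemma Nat.centralBinom_sq_mul_le (n : ℕ) : n.centralBinom ^ 2 * (2 * n + 1) ≤ 16 ^ n := by
  induction n with
  | zero => simp
  | succ n ih =>
    have hrec := Nat.succ_mul_centralBinom_succ n
    refine Nat.le_of_mul_le_mul_left ?_ (pow_pos n.succ_pos 2)
    calc (n + 1) ^ 2 * ((n + 1).centralBinom ^ 2 * (2 * (n + 1) + 1))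
        = 4 * ((2 * n + 1) * (2 * n + 3)) * (n.centralBinom ^ 2 * (2 * n + 1)) := by
          rw [← mul_assoc, ← mul_pow, hrec]; ring
      _ ≤ 4 * (4 * (n + 1) ^ 2) * 16 ^ n :=
          Nat.mul_le_mul (Nat.mul_le_mul_left 4 (by nlinarith)) ih
      _ = (n + 1) ^ 2 * 16 ^ (n + 1) := by ring

lemma Nat.choose_half_sq_mul_le (n : ℕ) : n.choose (n / 2) ^ 2 * (n + 1) ≤ 4 ^ n := by
  obtain ⟨j, rfl | rfl⟩ := n.even_or_odd'
  · rw [show 2 * j / 2 = j by omega, ← Nat.centralBinom_eq_two_mul_choose, pow_mul]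
    exact Nat.centralBinom_sq_mul_le j
  · have hmid : 2 * (2 * j + 1).choose j = (j + 1).centralBinom := by
      rw [Nat.centralBinom_eq_two_mul_choose, show 2 * (j + 1) = 2 * j + 1 + 1 by ring,
        Nat.choose_succ_succ', Nat.choose_symm_half]
      ring
    have h := Nat.centralBinom_sq_mul_le (j + 1)
    rw [← hmid] at h
    rw [show (2 * j + 1) / 2 = j by omega]
    refine Nat.le_of_mul_le_mul_left ?_ (show 0 < 4 by norm_num)
    calc 4 * ((2 * j + 1).choose j ^ 2 * (2 * j + 1 + 1))
        ≤ (2 * (2 * j + 1).choose j) ^ 2 * (2 * (j + 1) + 1) := by ring_nf; omega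
      _ ≤ 16 ^ (j + 1) := h
      _ = 4 * 4 ^ (2 * j + 1) := by rw [pow_succ, pow_succ, pow_mul]; ring

lemma tendsto_choose_half_div_two_pow :
    Tendsto (fun n : ℕ => (n.choose (n / 2) : ℝ) / 2 ^ n) atTop (𝓝 0) := by
  have hle : ∀ n : ℕ, (n.choose (n / 2) : ℝ) / 2 ^ n ≤ √(1 / ((n : ℝ) + 1)) := fun n => by
    rw [Real.le_sqrt (by positivity) (by positivity), div_pow, div_le_div_iff₀ (by positivity)
      (by positivity), one_mul, ← pow_mul, pow_mul']
    exact_mod_cast Nat.choose_half_sq_mul_le n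
  have hlim : Tendsto (fun n : ℕ => √(1 / ((n : ℝ) + 1))) atTop (𝓝 0) := by
    simpa using tendsto_one_div_add_atTop_nhds_zero_nat.sqrt
  exact squeeze_zero (fun n => by positivity) hle hlim

section lazy

variable {Y : Type*} {P : Y → Y → ℝ}

def unlazy (P : Y → Y → ℝ) : Y → Y → ℝ := fun x y => 2 * P x y - if x = y then 1 else 0

lemma IsStochastic.unlazy (hP : IsStochastic P) (hlazy : ∀ x, 1 / 2 ≤ P x x) :
    IsStochastic (unlazy P) where
  nonneg x y := by
    unfold _root_.unlazy
    split_ifs with h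
    · subst h; linarith [hlazy x]
    · linarith [hP.nonneg x y]
  hasSum x := by
    have h := ((hP.hasSum x).mul_left 2).sub (hasSum_ite_eq x (1 : ℝ))
    norm_num [eq_comm] at h
    exact h

lemma tsum_kpow_unlazy_mul (hP : IsStochastic P) (hlazy : ∀ x, 1 / 2 ≤ P x x) (k : ℕ)
    (x y : Y) :
    ∑' z, kpow (unlazy P) k x z * P z y
      = (kpow (unlazy P) k x y + kpow (unlazy P) (k + 1) x y) / 2 := by
  have hQ := hP.unlazy hlazy
  have hsplit : ∀ z, kpow (unlazy P) k x z * P z y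
      = (kpow (unlazy P) k x z * unlazy P z y + if z = y then kpow (unlazy P) k x z else 0) / 2 :=
    fun z => by unfold unlazy; split_ifs <;> ring
  rw [tsum_congr hsplit, tsum_div_const,
    (hQ.summable_mul_apply ((hQ.kpow k).summable x) y).tsum_add
      (summable_of_ne_finset_zero (s := {y}) fun z hz => if_neg (by simpa using hz)),
    tsum_ite_eq, ← kpow_succ' hQ]
  ring

lemma kpow_eq_tsum_choose (hP : IsStochastic P) (hlazy : ∀ x, 1 / 2 ≤ P x x) (n : ℕ) (x y : Y) :
    kpow P n x y = ∑' k, (n.choose k : ℝ) / 2 ^ n * kpow (unlazy P) k x y := by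
  have hrows := isStochastic_kpow_row (hP.unlazy hlazy) x
  induction n generalizing y with
  | zero =>
    rw [tsum_eq_single 0 fun k hk => by simp [Nat.choose_eq_zero_of_lt (Nat.pos_of_ne_zero hk)]]
    simp [kpow]
  | succ n ih =>
    calc kpow P (n + 1) x y
        = ∑' z, (∑' k, (n.choose k : ℝ) / 2 ^ n * kpow (unlazy P) k x z) * P z y := by
          simp only [kpow_succ' hP, ih]
      _ = ∑' k, (n.choose k : ℝ) / 2 ^ n * ∑' z, kpow (unlazy P) k x z * P z y :=
          (hrows.tsum_mul_tsum_comm (summable_choose_div_two_pow n) fun z => hP.abs_le_one z y).symm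
      _ = ∑' k, ((n + 1).choose k : ℝ) / 2 ^ (n + 1) * kpow (unlazy P) k x y := by
          simp only [tsum_kpow_unlazy_mul hP hlazy, div_mul_eq_mul_div, ← mul_div_assoc,
            tsum_div_const, tsum_choose_succ_mul, div_div, pow_succ]

lemma dist1_kpow_succ_le (hP : IsStochastic P) (hlazy : ∀ x, 1 / 2 ≤ P x x) (n : ℕ) (x : Y) :
    dist1 (kpow P (n + 1) x) (kpow P n x) ≤ (n.choose (n / 2) : ℝ) / 2 ^ n := by
  have hrows := isStochastic_kpow_row (hP.unlazy hlazy) x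
  simp only [funext (kpow_eq_tsum_choose hP hlazy _ x)]
  rw [← tsum_abs_choose_succ_div_sub]
  exact hrows.dist1_tsum_mul_le (summable_choose_div_two_pow _) (summable_choose_div_two_pow _)

end lazy

section harmonic

variable {Y : Type*} {P : Y → Y → ℝ}

lemma exists_isHarmonic_tendsto (hP : IsStochastic P) {g : ℕ → Y → ℝ} (hg : ∀ n z, |g n z| ≤ 1)
    (hasymp : ∀ z, Tendsto (fun n => ∑' u, P z u * g n u - g n z) atTop (𝓝 0)) :
    ∃ (U : Ultrafilter ℕ) (h : Y → ℝ), (U : Filter ℕ) ≤ atTop ∧ BoundedFn h ∧ IsHarmonic P h ∧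
      ∀ z, Tendsto (fun n => g n z) (U : Filter ℕ) (𝓝 (h z)) := by
  set U := Ultrafilter.of (atTop : Filter ℕ)
  have hU : (U : Filter ℕ) ≤ atTop := Ultrafilter.of_le _
  have hcube : IsCompact (Set.univ.pi fun _ : Y => Set.Icc (-1 : ℝ) 1) :=
    isCompact_univ_pi fun _ => isCompact_Icc
  obtain ⟨h, hmem, hlim⟩ := hcube.ultrafilter_le_nhds' (U.map g)
    (Ultrafilter.mem_map.2 (univ_mem' fun n z _ => abs_le.1 (hg n z)))
  have hlim' : ∀ z, Tendsto (fun n => g n z) (U : Filter ℕ) (𝓝 (h z)) :=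
    tendsto_pi_nhds.1 hlim
  refine ⟨U, h, hU, ⟨1, fun z => abs_le.2 (hmem z trivial)⟩, fun z => ?_, hlim'⟩
  have hPg : Tendsto (fun n => ∑' u, P z u * g n u) (U : Filter ℕ) (𝓝 (∑' u, P z u * h u)) :=
    tendsto_tsum_of_dominated_convergence (hP.summable z)
      (fun u => (hlim' u).const_mul (P z u)) (Eventually.of_forall fun n u => by
        rw [Real.norm_eq_abs, abs_mul, abs_of_nonneg (hP.nonneg z u)]
        exact mul_le_of_le_one_right (hP.nonneg z u) (hg n u))
  refine tendsto_nhds_unique (hlim' z) ?_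
  simpa using hPg.sub ((hasymp z).mono_left hU)

end harmonic

section liouville

variable {Y : Type*} {P : Y → Y → ℝ}

lemma tendsto_tsum_mul_kpow_sub (hP : IsStochastic P) (hlazy : ∀ x, 1 / 2 ≤ P x x)
    {f : ℕ → Y → ℝ} (hf : ∀ n w, |f n w| ≤ 1) (z : Y) :
    Tendsto (fun n => ∑' u, P z u * ∑' w, kpow P n u w * f n w - ∑' w, kpow P n z w * f n w)
      atTop (𝓝 0) := by
  have hbound : ∀ n, |∑' u, P z u * ∑' w, kpow P n u w * f n w - ∑' w, kpow P n z w * f n w|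
      ≤ (n.choose (n / 2) : ℝ) / 2 ^ n := fun n => by
    have hsucc : ∑' u, P z u * ∑' w, kpow P n u w * f n w = ∑' w, kpow P (n + 1) z w * f n w :=
      (hP.kpow n).tsum_mul_tsum_comm (hP.summable z) (hf n)
    rw [hsucc, ← (summable_mul_of_abs_le_one ((hP.kpow (n + 1)).summable z) (hf n)).tsum_sub
      (summable_mul_of_abs_le_one ((hP.kpow n).summable z) (hf n))]
    simp_rw [← sub_mul]
    exact (abs_tsum_mul_le_tsum_abs (((hP.kpow (n + 1)).summable z).sub
      ((hP.kpow n).summable z)) (hf n)).trans (dist1_kpow_succ_le hP hlazy n z)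
  exact squeeze_zero_norm hbound tendsto_choose_half_div_two_pow

lemma abs_sign_le_one (d : ℝ) : |(SignType.sign d : ℝ)| ≤ 1 := by
  rcases lt_trichotomy d 0 with h | h | h <;> simp [h]

theorem tendsto_dist1_kpow_of_liouville (hP : IsStochastic P) (hlazy : ∀ x, 1 / 2 ≤ P x x)
    (hLiou : ∀ h : Y → ℝ, BoundedFn h → IsHarmonic P h → ∀ x y, h x = h y) (x y : Y) :
    Tendsto (fun n => dist1 (kpow P n x) (kpow P n y)) atTop (𝓝 0) := by
  set D := fun n => dist1 (kpow P n x) (kpow P n y)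
  have hD : Tendsto D atTop (𝓝 (⨅ n, D n)) := tendsto_atTop_ciInf (antitone_dist1_kpow hP x y)
    ⟨0, Set.forall_mem_range.2 fun n => tsum_nonneg fun w => abs_nonneg _⟩
  set f : ℕ → Y → ℝ := fun n w => SignType.sign (kpow P n x w - kpow P n y w)
  have hf : ∀ n w, |f n w| ≤ 1 := fun n w => abs_sign_le_one _
  set g : ℕ → Y → ℝ := fun n z => ∑' w, kpow P n z w * f n w
  have hg : ∀ n z, |g n z| ≤ 1 := fun n z => by
    refine (abs_tsum_mul_le_tsum_abs ((hP.kpow n).summable z) (hf n)).trans_eq ?_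
    simp_rw [abs_of_nonneg ((hP.kpow n).nonneg z _)]
    exact ((hP.kpow n).hasSum z).tsum_eq
  have hgD : ∀ n, g n x - g n y = D n := fun n => by
    rw [← (summable_mul_of_abs_le_one ((hP.kpow n).summable x) (hf n)).tsum_sub
      (summable_mul_of_abs_le_one ((hP.kpow n).summable y) (hf n))]
    simp only [← sub_mul, f, self_mul_sign]
    rfl
  obtain ⟨U, h, hU, hbdd, hharm, hlim⟩ :=
    exists_isHarmonic_tendsto hP hg (tendsto_tsum_mul_kpow_sub hP hlazy hf)
  have hinf : ⨅ n, D n = h x - h y :=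
    tendsto_nhds_unique ((hD.mono_left hU).congr fun n => (hgD n).symm) ((hlim x).sub (hlim y))
  rwa [hinf, hLiou h hbdd hharm x y, sub_self] at hD

end liouville

section action

lemma IsProb.isStochastic_mul_inv {ν : G → ℝ} (hν : IsProb ν) :
    IsStochastic fun h g : G => ν (g * h⁻¹) :=
  ⟨fun _ _ => hν.1 _, fun h => (Equiv.mulRight h⁻¹).hasSum_iff.2 hν.2⟩

lemma isProb_conv {ν μ : G → ℝ} (hν : IsProb ν) (hμ : IsProb μ) : IsProb (conv ν μ) :=
  ⟨fun _ => tsum_nonneg fun _ => mul_nonneg (hν.1 _) (hμ.1 _), by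
    have h := hν.isStochastic_mul_inv.hasSum_tsum_mul hμ.2
    simp only [mul_comm (μ _)] at h
    exact h⟩

lemma isProb_convPow {μ : G → ℝ} (hμ : IsProb μ) (n : ℕ) : IsProb (convPow μ n) := by
  induction n with
  | zero => exact ⟨fun g => by unfold convPow deltaOne; positivity, hasSum_ite_eq 1 1⟩
  | succ n ih => exact isProb_conv ih hμ

lemma pushMeas_eq_tsum_mul (μ : G → ℝ) (x y : X) :
    pushMeas μ x y = ∑' g, μ g * if g • x = y then 1 else 0 := by
  simp only [pushMeas, mul_ite, mul_one, mul_zero]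

lemma isStochastic_transK {μ : G → ℝ} (hμ : IsProb μ) : IsStochastic (transK μ : X → X → ℝ) where
  nonneg x y := tsum_nonneg fun g => by split_ifs <;> simp [hμ.1 g]
  hasSum x := by
    have h := (isStochastic_ite_eq (· • x)).hasSum_tsum_mul hμ.2
    simp only [← pushMeas_eq_tsum_mul] at h
    exact h

lemma tsum_pushMeas_mul {μ : G → ℝ} (hμ : IsProb μ) {F : X → ℝ} {C : ℝ} (hF : ∀ z, |F z| ≤ C)
    (x : X) : ∑' z, pushMeas μ x z * F z = ∑' g, μ g * F (g • x) := by
  simp only [pushMeas_eq_tsum_mul]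
  rw [← (isStochastic_ite_eq (· • x)).tsum_mul_tsum_comm hμ.2.summable hF]
  simp

lemma pushMeas_conv {ν μ : G → ℝ} (hν : IsProb ν) (hμ : IsProb μ) (x y : X) :
    pushMeas (conv ν μ) x y = ∑' h, μ h * pushMeas ν (h • x) y := by
  have hshift : ∀ h : G, pushMeas ν (h • x) y = ∑' g, ν (g * h⁻¹) * if g • x = y then 1 else 0 :=
    fun h => by
      rw [pushMeas_eq_tsum_mul, ← (Equiv.mulRight h⁻¹).tsum_eq]
      simp [mul_smul]
  simp only [hshift, hν.isStochastic_mul_inv.tsum_mul_tsum_comm hμ.2.summable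
    (f := fun g : G => if g • x = y then (1 : ℝ) else 0) (C := 1) fun g => by split_ifs <;> simp]
  simp only [pushMeas_eq_tsum_mul, conv, mul_comm (μ _)]

lemma pushMeas_convPow {μ : G → ℝ} (hμ : IsProb μ) (n : ℕ) (x : X) :
    pushMeas (convPow μ n) x = kpow (transK μ) n x := by
  funext y
  induction n generalizing x with
  | zero =>
    rw [convPow, pushMeas, tsum_eq_single 1 fun g hg => by simp [deltaOne, hg]]
    simp [deltaOne, kpow]
  | succ n ih =>
    have hK := (isStochastic_transK (X := X) hμ).kpow n
    rw [convPow, pushMeas_conv (isProb_convPow hμ n) hμ]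
    simp only [ih, kpow]
    exact (tsum_pushMeas_mul hμ (fun z => hK.abs_le_one z y) x).symm

end action

theorem stmt15_general {G : Type*} [Group G] {X : Type*} [MulAction G X]
    (μ : G → ℝ) (hμ : IsProb μ)
    (hlazy : ∀ x : X, (1 : ℝ) / 2 ≤ transK μ x x)
    (hLiou : ∀ h : X → ℝ, BoundedFn h → IsHarmonic (transK μ) h → ∀ x y : X, h x = h y) :
    ∀ x y : X,
      Filter.Tendsto
        (fun n => dist1 (pushMeas (convPow μ n) x) (pushMeas (convPow μ n) y))
        Filter.atTop (nhds 0) := by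
  intro x y
  simp only [pushMeas_convPow hμ]
  exact tendsto_dist1_kpow_of_liouville (isStochastic_transK hμ) hlazy hLiou x y

/-- Lemma 1: for a lazy irreducible Liouville kernel, the distributions from
any two starting points merge in ℓ¹. -/
theorem stmt15 {G : Type*} [Group G] [Countable G] {X : Type*} [MulAction G X] [Countable X]
    (μ : G → ℝ) (hμ : IsProb μ)
    (hirr : ∀ x y : X, ∃ n : ℕ, 0 < kpow (transK μ) n x y)
    (hlazy : ∀ x : X, (1 : ℝ) / 2 ≤ transK μ x x)
    (hLiou : ∀ h : X → ℝ, BoundedFn h → IsHarmonic (transK μ) h → ∀ x y : X, h x = h y) :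
    ∀ x y : X,
      Filter.Tendsto
        (fun n => dist1 (pushMeas (convPow μ n) x) (pushMeas (convPow μ n) y))
        Filter.atTop (nhds 0) :=
  stmt15_general μ hμ hlazy hLiou
end
end
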